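/- In a quadratic Hom-Novikov superalgebra (A, μ, α, B) with α an automorphism, for all homogeneous x, y, z ∈ A: α(z)·[x,y] = 0, where [x,y] = xy − (−1)^{|x||y|}yx; that is, left multiplication by any element annihilates all super-commutators. -/

import Mathlib

/-!
Invariance of `B` moves `α z` across the product: `B (α z · [x,y], α² u) = B (α² z, [x,y] · α u)`.
By left-symmetry `[x,y] · α u = α x (y u) - ε α y (x u)` with `ε = (-1)^(|x||y|)`, and invariance together with
multiplicativity of `α` turns the two terms into `B ((z x) α y, α² u)` and `ε B ((z y) α x, α² u)`,
which agree by right-commutativity. Since `α²` is onto and the homogeneous elements span `A`,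
nondegeneracy of `B` forces `α z · [x,y] = 0`.
-/

/-- The sub-adjacent super-commutator bracket `[x,y] = xy - (-1)^(|x||y|) yx`
for homogeneous `x` of degree `i` and `y` of degree `j`. -/
def sbr {𝕜 A : Type*} [Field 𝕜] [AddCommGroup A] [Module 𝕜 A]
    (mul : A →ₗ[𝕜] A →ₗ[𝕜] A) (i j : ZMod 2) (x y : A) : A :=
  mul x y - ((-1 : 𝕜) ^ (i.val * j.val)) • mul y x

section HomNovikov

variable {𝕜 A : Type*} [Field 𝕜] [AddCommGroup A] [Module 𝕜 A]
  {mul : A →ₗ[𝕜] A →ₗ[𝕜] A} {α : A →ₗ[𝕜] A} {B : A →ₗ[𝕜] A →ₗ[𝕜] 𝕜}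
  {G : ZMod 2 → Submodule 𝕜 A}

theorem sbr_mul_eq_of_hom_leftSymm {i j : ZMod 2} {x y z : A}
    (h : mul (mul x y) (α z) - mul (α x) (mul y z)
        = ((-1 : 𝕜) ^ (i.val * j.val)) • (mul (mul y x) (α z) - mul (α y) (mul x z))) :
    mul (sbr mul i j x y) (α z)
      = mul (α x) (mul y z) - ((-1 : 𝕜) ^ (i.val * j.val)) • mul (α y) (mul x z) := by
  simp only [sbr, map_sub, map_smul, LinearMap.sub_apply, LinearMap.smul_apply]
  linear_combination (norm := module) h

theorem apply_mul_mul_eq_apply_mul_alpha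
    (hα_mul : ∀ x y : A, α (mul x y) = mul (α x) (α y))
    (hB_inv : ∀ x y z : A, B (α x) (mul y z) = B (mul x y) (α z)) (x y z u : A) :
    B (α (α z)) (mul (α x) (mul y u)) = B (mul (mul z x) (α y)) (α (α u)) := by
  rw [hB_inv, ← hα_mul, hα_mul y u, hB_inv]

theorem apply_mul_sbr_alpha_alpha_eq_zero
    (hα_mul : ∀ x y : A, α (mul x y) = mul (α x) (α y))
    (hls : ∀ i j k : ZMod 2, ∀ x ∈ G i, ∀ y ∈ G j, ∀ z ∈ G k,
      mul (mul x y) (α z) - mul (α x) (mul y z)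
        = ((-1 : 𝕜) ^ (i.val * j.val)) • (mul (mul y x) (α z) - mul (α y) (mul x z)))
    (hrn : ∀ i j k : ZMod 2, ∀ x ∈ G i, ∀ y ∈ G j, ∀ z ∈ G k,
      mul (mul x y) (α z) = ((-1 : 𝕜) ^ (j.val * k.val)) • mul (mul x z) (α y))
    (hB_inv : ∀ x y z : A, B (α x) (mul y z) = B (mul x y) (α z))
    {i j k l : ZMod 2} {x y z u : A} (hx : x ∈ G i) (hy : y ∈ G j) (hz : z ∈ G k)
    (hu : u ∈ G l) :
    B (mul (α z) (sbr mul i j x y)) (α (α u)) = 0 := by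
  rw [← hB_inv, sbr_mul_eq_of_hom_leftSymm (hls i j l x hx y hy u hu), map_sub, map_smul,
    apply_mul_mul_eq_apply_mul_alpha hα_mul hB_inv,
    apply_mul_mul_eq_apply_mul_alpha hα_mul hB_inv, hrn k i j z hz x hx y hy,
    LinearMap.map_smul₂, sub_self]

end HomNovikov

theorem stmt19_general
    (𝕜 A : Type*) [Field 𝕜] [AddCommGroup A] [Module 𝕜 A]
    (G : ZMod 2 → Submodule 𝕜 A) (hG : DirectSum.IsInternal G)
    (mul : A →ₗ[𝕜] A →ₗ[𝕜] A) (α : A →ₗ[𝕜] A)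
    (hα_mul : ∀ x y : A, α (mul x y) = mul (α x) (α y))
    (hls : ∀ i j k : ZMod 2, ∀ x ∈ G i, ∀ y ∈ G j, ∀ z ∈ G k,
      mul (mul x y) (α z) - mul (α x) (mul y z)
        = ((-1 : 𝕜) ^ (i.val * j.val)) • (mul (mul y x) (α z) - mul (α y) (mul x z)))
    (hrn : ∀ i j k : ZMod 2, ∀ x ∈ G i, ∀ y ∈ G j, ∀ z ∈ G k,
      mul (mul x y) (α z) = ((-1 : 𝕜) ^ (j.val * k.val)) • mul (mul x z) (α y))
    (B : A →ₗ[𝕜] A →ₗ[𝕜] 𝕜)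
    (hB_nd : ∀ x : A, (∀ y : A, B x y = 0) → x = 0)
    (hB_inv : ∀ x y z : A, B (α x) (mul y z) = B (mul x y) (α z))
    (hα_bij : Function.Bijective α) :
    ∀ i j k : ZMod 2, ∀ x ∈ G i, ∀ y ∈ G j, ∀ z ∈ G k,
      mul (α z) (sbr mul i j x y) = 0 := by
  intro i j k x hx y hy z hz
  have hvanish : (B (mul (α z) (sbr mul i j x y))).comp (α ∘ₗ α) = 0 := by
    refine LinearMap.ker_eq_top.mp (eq_top_iff.mpr ?_)
    rw [← hG.submodule_iSup_eq_top]
    exact iSup_le fun l u hu =>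
      apply_mul_sbr_alpha_alpha_eq_zero hα_mul hls hrn hB_inv hx hy hz hu
  refine hB_nd _ fun v => ?_
  obtain ⟨u, rfl⟩ := hα_bij.2.comp hα_bij.2 v
  exact LinearMap.congr_fun hvanish u

theorem stmt19
    (𝕜 A : Type*) [Field 𝕜] [AddCommGroup A] [Module 𝕜 A]
    (G : ZMod 2 → Submodule 𝕜 A) (hG : DirectSum.IsInternal G)
    (mul : A →ₗ[𝕜] A →ₗ[𝕜] A) (α : A →ₗ[𝕜] A)
    (hmul_even : ∀ i j : ZMod 2, ∀ x ∈ G i, ∀ y ∈ G j, mul x y ∈ G (i + j))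
    (hα_even : ∀ i : ZMod 2, ∀ x ∈ G i, α x ∈ G i)
    (hα_mul : ∀ x y : A, α (mul x y) = mul (α x) (α y))
    (hls : ∀ i j k : ZMod 2, ∀ x ∈ G i, ∀ y ∈ G j, ∀ z ∈ G k,
      mul (mul x y) (α z) - mul (α x) (mul y z)
        = ((-1 : 𝕜) ^ (i.val * j.val)) • (mul (mul y x) (α z) - mul (α y) (mul x z)))
    (hrn : ∀ i j k : ZMod 2, ∀ x ∈ G i, ∀ y ∈ G j, ∀ z ∈ G k,
      mul (mul x y) (α z) = ((-1 : 𝕜) ^ (j.val * k.val)) • mul (mul x z) (α y))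
    (B : A →ₗ[𝕜] A →ₗ[𝕜] 𝕜)
    (hB_even : ∀ i j : ZMod 2, i ≠ j → ∀ x ∈ G i, ∀ y ∈ G j, B x y = 0)
    (hB_sym : ∀ i j : ZMod 2, ∀ x ∈ G i, ∀ y ∈ G j,
      B x y = ((-1 : 𝕜) ^ (i.val * j.val)) * B y x)
    (hB_nd : ∀ x : A, (∀ y : A, B x y = 0) → x = 0)
    (hB_inv : ∀ x y z : A, B (α x) (mul y z) = B (mul x y) (α z))
    (hα_bij : Function.Bijective α) :
    ∀ i j k : ZMod 2, ∀ x ∈ G i, ∀ y ∈ G j, ∀ z ∈ G k,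
      mul (α z) (sbr mul i j x y) = 0 :=
  stmt19_general 𝕜 A G hG mul α hα_mul hls hrn B hB_nd hB_inv hα_bij
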